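/- Let φ : X → Y be an extension of compact semiflows of a topological monoid T such that t·φ⁻¹(y) = φ⁻¹(t·y) for all t ∈ T and y ∈ Y. If φ is highly proximal and the set of almost periodic points of the semiflow on X is dense in X, then φ is semi-open. -/
import Mathlib


/-- The hyperspace `2^X` of all nonempty closed subsets of `X`. -/
def Hyper (X : Type*) [TopologicalSpace X] : Type _ := {K : Set X // IsClosed K ∧ K.Nonempty}

/-- The Vietoris topology on the hyperspace, generated by the subbasic sets
`{K | K ⊆ U}` and `{K | K ∩ U ≠ ∅}` for `U` open. -/
instance Hyper.instTopologicalSpace (X : Type*) [TopologicalSpace X] :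
    TopologicalSpace (Hyper X) :=
  TopologicalSpace.generateFrom
    ({S | ∃ U : Set X, IsOpen U ∧ S = {K : Hyper X | K.1 ⊆ U}} ∪
     {S | ∃ U : Set X, IsOpen U ∧ S = {K : Hyper X | (K.1 ∩ U).Nonempty}})

/-- The induced map `2^f : 2^X → 2^Y`, `K ↦ f[K]`.  (For closed subsets of a compact
space and continuous `f` into a Hausdorff space the image `f[K]` is closed, so taking
the closure below is redundant and this is indeed `K ↦ f[K]`.) -/
def hyperMap {X Y : Type*} [TopologicalSpace X] [TopologicalSpace Y] (f : X → Y) :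
    Hyper X → Hyper Y :=
  fun K => ⟨closure (f '' K.1), isClosed_closure, (K.2.2.image f).closure⟩

/-- A continuous surjection `g : A → B` is *semi-open* if for every nonempty open set
`U ⊆ A`, the interior of the image `g '' U` is nonempty. -/
def SemiOpen {A B : Type*} [TopologicalSpace A] [TopologicalSpace B] (g : A → B) : Prop :=
  ∀ U : Set A, IsOpen U → U.Nonempty → (interior (g '' U)).Nonempty

/-- A point `x` is *almost periodic* for the semiflow `T ↷ X` if `x ∈ cl(T·x)` and the
orbit closure `cl(T·x)` is a minimal subset, i.e. every point of `cl(T·x)` has orbit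
closure equal to `cl(T·x)`. -/
def IsAlmostPeriodicPt (T : Type*) {X : Type*} [Monoid T] [MulAction T X]
    [TopologicalSpace X] (x : X) : Prop :=
  x ∈ closure (MulAction.orbit T x) ∧
  ∀ z ∈ closure (MulAction.orbit T x),
    closure (MulAction.orbit T z) = closure (MulAction.orbit T x)

/-- The extension `φ : X → Y` of semiflows is *highly proximal* if for every `y ∈ Y`
there is a net `(tₙ)` in `T` with `tₙ • φ⁻¹(y)` converging in the hyperspace `2^X` to a
singleton; equivalently (as stated here), for every `y ∈ Y` some singleton `{x}` lies in
the closure in `2^X` of the set `{t • φ⁻¹(y) | t ∈ T}`, where `T` acts on `2^X` by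
`t • K = cl {t • x | x ∈ K}`. -/
def HighlyProximal (T : Type*) {X Y : Type*} [Monoid T] [MulAction T X]
    [TopologicalSpace X] [T1Space X] [TopologicalSpace Y] [T1Space Y]
    (φ : X → Y) (hc : Continuous φ) (hs : Function.Surjective φ) : Prop :=
  ∀ y : Y, ∃ x : X,
    (⟨{x}, isClosed_singleton, Set.singleton_nonempty x⟩ : Hyper X) ∈
      closure (Set.range fun t : T =>
        hyperMap (fun z : X => t • z)
          ⟨φ ⁻¹' {y}, isClosed_singleton.preimage hc,
            (Set.singleton_nonempty y).preimage hs⟩)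

/-- Theorem 6C. Let `φ : X → Y` be an extension of compact semiflows of a topological
monoid `T` with `t • φ⁻¹(y) = φ⁻¹(t • y)` for all `t, y`. If `φ` is highly proximal and
the almost periodic points of `X` are dense, then `φ` is semi-open. -/
theorem semiOpen_of_highlyProximal
    {T X Y : Type*} [Monoid T] [TopologicalSpace T] [ContinuousMul T]
    [TopologicalSpace X] [CompactSpace X] [T2Space X]
    [MulAction T X] [ContinuousSMul T X]
    [TopologicalSpace Y] [CompactSpace Y] [T2Space Y]
    [MulAction T Y] [ContinuousSMul T Y]
    {φ : X → Y} (hc : Continuous φ) (hs : Function.Surjective φ)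
    (hequiv : ∀ (t : T) (x : X), φ (t • x) = t • φ x)
    (hfiber : ∀ (t : T) (y : Y), (fun x : X => t • x) '' (φ ⁻¹' {y}) = φ ⁻¹' {t • y})
    (hhp : HighlyProximal T φ hc hs)
    (hap : Dense {x : X | IsAlmostPeriodicPt T x}) :
    SemiOpen φ := by
  intro U hU hUne
  obtain ⟨x, hxap, hxU⟩ := hap.exists_mem_open hU hUne
  obtain ⟨x₀, hx₀⟩ := hhp (φ x)
  have key : ∀ W : Set X, IsOpen W → x₀ ∈ W → ∃ t : T, φ ⁻¹' {t • φ x} ⊆ W := by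
    intro W hW hx₀W
    have hSopen : IsOpen {K : Hyper X | K.1 ⊆ W} :=
      TopologicalSpace.GenerateOpen.basic _ (Or.inl ⟨W, hW, rfl⟩)
    have hmem : (⟨{x₀}, isClosed_singleton, Set.singleton_nonempty x₀⟩ : Hyper X) ∈
        {K : Hyper X | K.1 ⊆ W} := Set.singleton_subset_iff.mpr hx₀W
    obtain ⟨K, hKS, t, rfl⟩ :=
      (mem_closure_iff (X := Hyper X)).mp hx₀ _ hSopen hmem
    simp only [hyperMap, Set.mem_setOf_eq] at hKS
    refine ⟨t, fun z hz => hKS (subset_closure ?_)⟩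
    rw [hfiber t (φ x)]
    exact hz
  have hx₀orb : x₀ ∈ closure (MulAction.orbit T x) := by
    rw [mem_closure_iff]
    intro W hW hx₀W
    obtain ⟨t, ht⟩ := key W hW hx₀W
    exact ⟨t • x, ht (by simp [hequiv t x]), t, rfl⟩
  have hxcl : x ∈ closure (MulAction.orbit T x₀) := (hxap.2 x₀ hx₀orb) ▸ hxap.1
  obtain ⟨_, hsU, s, rfl⟩ := mem_closure_iff.mp hxcl U hU hxU
  have hW' : IsOpen ((fun z : X => s • z) ⁻¹' U) := hU.preimage (continuous_const_smul s)
  obtain ⟨t, ht⟩ := key _ hW' hsU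
  have hfib : φ ⁻¹' {(s * t) • φ x} ⊆ U := by
    intro z hz
    have h1 : φ ⁻¹' {(s * t) • φ x} = (fun w : X => s • w) '' (φ ⁻¹' {t • φ x}) := by
      rw [hfiber s (t • φ x), smul_smul]
    rw [h1] at hz
    obtain ⟨w, hw, rfl⟩ := hz
    exact ht hw
  refine ⟨(s * t) • φ x, ?_⟩
  rw [mem_interior]
  refine ⟨(φ '' Uᶜ)ᶜ, ?_, ?_, ?_⟩
  · intro z hz
    obtain ⟨w, hw⟩ := hs z
    refine ⟨w, ?_, hw⟩
    by_contra hwU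
    exact hz ⟨w, hwU, hw⟩
  · exact ((hU.isClosed_compl.isCompact).image hc).isClosed.isOpen_compl
  · rintro ⟨w, hwU, hwy⟩
    exact hwU (hfib (by simp [hwy]))
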